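/- Let χ > 1 be a real number and let m ≥ 1 be an integer. Then P_{m+1}(χ) = P_{m−1}(χ) + 4m·O_m(χ). -/

import Mathlib

open Real MeasureTheory

/-- `P χ m = ∫₀^{2π} cos(mφ)/√(χ − cos φ) dφ`. -/
noncomputable def P (χ : ℝ) (m : ℕ) : ℝ :=
  ∫ φ in (0:ℝ)..(2 * Real.pi), Real.cos (m * φ) / Real.sqrt (χ - Real.cos φ)

/-- `O χ m = ∫₀^{2π} cos(mφ)·√(χ − cos φ) dφ`. -/
noncomputable def O (χ : ℝ) (m : ℕ) : ℝ :=
  ∫ φ in (0:ℝ)..(2 * Real.pi), Real.cos (m * φ) * Real.sqrt (χ - Real.cos φ)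

/-! Integrate `d/dφ [sin(mφ) √(χ − cos φ)] = m cos(mφ) √(χ − cos φ) + sin(mφ) sin φ / (2√(χ − cos φ))`
over a period. The left side integrates to `0`, and `2 sin(mφ) sin φ = cos((m−1)φ) − cos((m+1)φ)`
turns the second term into `(P_{m−1} − P_{m+1}) / 4`. -/

section

variable {χ : ℝ}

lemma sub_cos_pos (hχ : 1 < χ) (φ : ℝ) : 0 < χ - cos φ := by
  linarith [cos_le_one φ]

lemma sqrt_sub_cos_ne_zero (hχ : 1 < χ) (φ : ℝ) : √(χ - cos φ) ≠ 0 :=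
  (sqrt_pos.mpr (sub_cos_pos hχ φ)).ne'

lemma continuous_sqrt_sub_cos (χ : ℝ) : Continuous fun φ => √(χ - cos φ) := by
  fun_prop

lemma continuous_cos_mul_div_sqrt_sub_cos (hχ : 1 < χ) (c : ℝ) :
    Continuous fun φ => cos (c * φ) / √(χ - cos φ) :=
  (by fun_prop : Continuous fun φ => cos (c * φ)).div (continuous_sqrt_sub_cos χ)
    (sqrt_sub_cos_ne_zero hχ)

lemma hasDerivAt_sin_mul_mul_sqrt_sub_cos (hχ : 1 < χ) (c φ : ℝ) :
    HasDerivAt (fun φ => sin (c * φ) * √(χ - cos φ))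
      (c * (cos (c * φ) * √(χ - cos φ)) +
        (cos ((c - 1) * φ) / √(χ - cos φ) - cos ((c + 1) * φ) / √(χ - cos φ)) / 4) φ := by
  have hsin : HasDerivAt (fun φ => sin (c * φ)) (cos (c * φ) * c) φ :=
    ((hasDerivAt_id φ).const_mul c).sin.congr_deriv (by simp)
  have hsqrt : HasDerivAt (fun φ => √(χ - cos φ)) (sin φ / (2 * √(χ - cos φ))) φ :=
    (((hasDerivAt_cos φ).const_sub χ).sqrt (sub_cos_pos hχ φ).ne').congr_deriv (by ring)
  refine (hsin.mul hsqrt).congr_deriv ?_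
  have hs := sqrt_sub_cos_ne_zero hχ φ
  rw [sub_mul, add_mul, cos_sub, cos_add]
  field_simp
  ring

lemma P_succ_eq_integral_add (hχ : 1 < χ) (m : ℕ) :
    P χ (m + 1) = (∫ φ in (0:ℝ)..2 * π, cos ((m - 1) * φ) / √(χ - cos φ)) + 4 * m * O χ m := by
  have hcos_div (c : ℝ) :=
    (continuous_cos_mul_div_sqrt_sub_cos hχ c).intervalIntegrable (μ := volume) 0 (2 * π)
  have hcos_mul : IntervalIntegrable (fun φ => cos (m * φ) * √(χ - cos φ)) volume 0 (2 * π) :=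
    ((by fun_prop : Continuous fun φ => cos (m * φ)).mul
      (continuous_sqrt_sub_cos χ)).intervalIntegrable 0 (2 * π)
  have hint := intervalIntegral.integral_eq_sub_of_hasDerivAt
    (fun φ _ => hasDerivAt_sin_mul_mul_sqrt_sub_cos hχ m φ)
    ((hcos_mul.const_mul _).add (((hcos_div _).sub (hcos_div _)).div_const 4))
  rw [intervalIntegral.integral_add (hcos_mul.const_mul _)
      (((hcos_div _).sub (hcos_div _)).div_const 4),
    intervalIntegral.integral_const_mul, intervalIntegral.integral_div,
    intervalIntegral.integral_sub (hcos_div _) (hcos_div _),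
    sin_periodic.nat_mul_eq m] at hint
  simp only [sin_zero, zero_mul, mul_zero, sub_zero] at hint
  push_cast [P, O]
  linarith

end

theorem stmt_1 (χ : ℝ) (hχ : 1 < χ) (m : ℕ) (hm : 1 ≤ m) :
    P χ (m + 1) = P χ (m - 1) + 4 * m * O χ m := by
  rw [P_succ_eq_integral_add hχ, P, Nat.cast_sub hm, Nat.cast_one]
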